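/- arXiv:1012.5265 — 2 statements merged into one kernel-verified Lean document; each statement's English description precedes it below -/
import Mathlib

section
/- Let λ be a Young diagram with n boxes, first-column length μ₁, and column lengths μ₁ ≥ μ₂ ≥ ... ≥ μ_r. For a filling T of λ, the adjacent-pair matrix N_T is in highest form if and only if T satisfies: (a) the leftmost column of T is filled with the integers {1,...,μ₁}; and (b) whenever (i₁,j₁) and (i₂,j₂) are both adjacent pairs in T (with i left of j in each), then i₁ < i₂ if and only if j₁ < j₂. -/
/-- A filling of `μ` by `{1, ..., μ.card}`. -/
def IsFilling (μ : YoungDiagram) (T : ℕ × ℕ → ℕ) : Prop :=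
  Set.BijOn T (↑μ.cells) (Set.Icc 1 μ.card)

/-- `i` is directly left-adjacent to `j` in the filling `T`. -/
def Adjacent (μ : YoungDiagram) (T : ℕ × ℕ → ℕ) (i j : ℕ) : Prop :=
  ∃ r c, (r, c) ∈ μ ∧ (r, c + 1) ∈ μ ∧ T (r, c) = i ∧ T (r, c + 1) = j

open Classical in
/-- The adjacent-pair matrix of `T` (indices one-indexed via `Fin μ.card`). -/
noncomputable def adjPairMatrix (μ : YoungDiagram) (T : ℕ × ℕ → ℕ) :
    Matrix (Fin μ.card) (Fin μ.card) ℂ :=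
  Matrix.of fun i j => if Adjacent μ T ((i : ℕ) + 1) ((j : ℕ) + 1) then 1 else 0

/-- `X i k` is a pivot of `X`. -/
def IsPivot {n : ℕ} (X : Matrix (Fin n) (Fin n) ℂ) (i k : Fin n) : Prop :=
  X i k ≠ 0 ∧ (∀ j, j < k → X i j = 0) ∧ (∀ j, i < j → X j k = 0)

open Classical in
/-- `r_j`: the (one-indexed) row of the pivot in column `j` if it exists, `0` otherwise. -/
noncomputable def pivotRow {n : ℕ} (X : Matrix (Fin n) (Fin n) ℂ) (j : Fin n) : ℕ :=
  if h : ∃ i, IsPivot X i j then (h.choose : ℕ) + 1 else 0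

/-- An (strictly) upper-triangular nilpotent matrix is in highest form if its pivot rows
form a nondecreasing sequence `r₁ ≤ r₂ ≤ ⋯ ≤ r_n`. -/
def IsHighestForm {n : ℕ} (X : Matrix (Fin n) (Fin n) ℂ) : Prop :=
  (∀ i j : Fin n, j ≤ i → X i j = 0) ∧ Monotone (pivotRow X)

/-
Every value of a filling has at most one left and at most one right neighbour, so `N_T` has at
most one nonzero entry in each row and column; these entries are its pivots, and the pivot row of
column `v` is the left neighbour `L v` of `v` (or `0` if there is none). Highest form thus says that
`N_T` is strictly upper triangular and `L` is monotone on `[1, n]`.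

The values without left neighbour are exactly the first-column entries. Monotonicity of `L` makes
this set of size `μ₁` downward closed, i.e. equal to `[1, μ₁]`, and, `L` being injective where it is
nonzero, strictly monotone on the values with a left neighbour, which is (b). Conversely, (a) and
(b) make `L` vanish on `[1, μ₁]` and strictly increase on `(μ₁, n]`, hence monotone; and
`L b + (n - b) ≤ L n ≤ n` forces `L b < b` for every adjacent pair, i.e. upper triangularity.
-/

lemma StrictMonoOn.add_le_nat {f : ℕ → ℕ} {a : ℕ} :
    ∀ {m : ℕ}, StrictMonoOn f (Set.Icc a (a + m)) → m + f a ≤ f (a + m)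
  | 0, _ => by simp
  | m + 1, hf => by
    have ih := StrictMonoOn.add_le_nat (m := m) (hf.mono (Set.Icc_subset_Icc_right (by omega)))
    have := hf ⟨by omega, by omega⟩ ⟨by omega, le_rfl⟩ (show a + m < a + (m + 1) by omega)
    omega

lemma Finset.eq_Icc_one_card_of_forall_le_mem {s : Finset ℕ} (h0 : 0 ∉ s)
    (hs : ∀ v ∈ s, ∀ w, 1 ≤ w → w ≤ v → w ∈ s) : s = Finset.Icc 1 s.card := by
  have hsub : s ⊆ Finset.Icc 1 s.card := by
    intro v hv
    have hv1 : 1 ≤ v := Nat.one_le_iff_ne_zero.2 fun h => h0 (h ▸ hv)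
    have := Finset.card_le_card fun w hw =>
      hs v hv w (Finset.mem_Icc.1 hw).1 (Finset.mem_Icc.1 hw).2
    rw [Nat.card_Icc] at this
    exact Finset.mem_Icc.2 ⟨hv1, by omega⟩
  exact Finset.eq_of_subset_of_card_le hsub (by simp)

lemma exists_fin_add_one_eq {n v : ℕ} (hv : v ∈ Set.Icc 1 n) : ∃ i : Fin n, (i : ℕ) + 1 = v :=
  ⟨⟨v - 1, by grind⟩, by grind⟩

lemma monotone_fin_add_one_iff {α : Type*} [Preorder α] {n : ℕ} {f : ℕ → α} :
    Monotone (fun k : Fin n => f (k + 1)) ↔ MonotoneOn f (Set.Icc 1 n) := by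
  refine ⟨fun h v hv w hw hvw => ?_, fun h i j hij => h ⟨by omega, i.2⟩ ⟨by omega, j.2⟩ (by simpa)⟩
  obtain ⟨i, rfl⟩ := exists_fin_add_one_eq hv
  obtain ⟨j, rfl⟩ := exists_fin_add_one_eq hw
  exact h (by simpa using hvw)

section Pivot

variable {n : ℕ} {X : Matrix (Fin n) (Fin n) ℂ} {i i' k : Fin n}

lemma IsPivot.unique (h : IsPivot X i k) (h' : IsPivot X i' k) : i = i' := by
  rcases lt_trichotomy i i' with hlt | heq | hgt
  · exact absurd (h.2.2 i' hlt) h'.1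
  · exact heq
  · exact absurd (h'.2.2 i hgt) h.1

lemma IsPivot.pivotRow_eq (h : IsPivot X i k) : pivotRow X k = i + 1 := by
  have he : ∃ i, IsPivot X i k := ⟨i, h⟩
  rw [pivotRow, dif_pos he, he.choose_spec.unique h]

end Pivot

section Filling

variable {μ : YoungDiagram} {T : ℕ × ℕ → ℕ} {a a' b b' v : ℕ}

lemma IsFilling.mem_Icc (hT : IsFilling μ T) {x : ℕ × ℕ} (hx : x ∈ μ) :
    T x ∈ Set.Icc 1 μ.card :=
  hT.mapsTo (by simpa using hx)

lemma IsFilling.inj (hT : IsFilling μ T) {x y : ℕ × ℕ} (hx : x ∈ μ) (hy : y ∈ μ)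
    (h : T x = T y) : x = y :=
  hT.injOn (by simpa using hx) (by simpa using hy) h

lemma Adjacent.left_mem_Icc (hT : IsFilling μ T) (h : Adjacent μ T a b) :
    a ∈ Set.Icc 1 μ.card := by
  obtain ⟨r, c, hl, -, rfl, -⟩ := h
  exact hT.mem_Icc hl

lemma Adjacent.right_mem_Icc (hT : IsFilling μ T) (h : Adjacent μ T a b) :
    b ∈ Set.Icc 1 μ.card := by
  obtain ⟨r, c, -, hr, -, rfl⟩ := h
  exact hT.mem_Icc hr

lemma Adjacent.ne (hT : IsFilling μ T) (h : Adjacent μ T a b) : a ≠ b := by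
  obtain ⟨r, c, hl, hr, rfl, rfl⟩ := h
  intro hab
  simpa using hT.inj hl hr hab

lemma Adjacent.left_unique (hT : IsFilling μ T) (h : Adjacent μ T a b)
    (h' : Adjacent μ T a' b) : a = a' := by
  obtain ⟨r, c, -, hr, rfl, rfl⟩ := h
  obtain ⟨r', c', -, hr', rfl, hb⟩ := h'
  obtain ⟨rfl, rfl⟩ : r = r' ∧ c = c' := by simpa using hT.inj hr hr' hb.symm
  rfl

lemma Adjacent.right_unique (hT : IsFilling μ T) (h : Adjacent μ T a b)
    (h' : Adjacent μ T a b') : b = b' := by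
  obtain ⟨r, c, hl, -, rfl, rfl⟩ := h
  obtain ⟨r', c', hl', -, ha, rfl⟩ := h'
  obtain ⟨rfl, rfl⟩ : r = r' ∧ c = c' := by simpa using hT.inj hl hl' ha.symm
  rfl

def firstColumn (μ : YoungDiagram) (T : ℕ × ℕ → ℕ) : Finset ℕ :=
  (Finset.range (μ.colLen 0)).image fun r => T (r, 0)

lemma mem_firstColumn : v ∈ firstColumn μ T ↔ ∃ r, (r, 0) ∈ μ ∧ T (r, 0) = v := by
  simp [firstColumn, YoungDiagram.mem_iff_lt_colLen]

lemma card_firstColumn (hT : IsFilling μ T) : (firstColumn μ T).card = μ.colLen 0 := by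
  rw [firstColumn, Finset.card_image_of_injOn, Finset.card_range]
  intro r hr r' hr' h
  simpa using hT.inj (YoungDiagram.mem_iff_lt_colLen.2 (by simpa using hr))
    (YoungDiagram.mem_iff_lt_colLen.2 (by simpa using hr')) h

lemma firstColumn_eq_Icc_iff :
    firstColumn μ T = Finset.Icc 1 (μ.colLen 0) ↔
      ((∀ r, (r, 0) ∈ μ → T (r, 0) ∈ Finset.Icc 1 (μ.colLen 0)) ∧
        ∀ v ∈ Finset.Icc 1 (μ.colLen 0), ∃ r, (r, 0) ∈ μ ∧ T (r, 0) = v) := by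
  simp only [Finset.ext_iff, mem_firstColumn]
  exact ⟨fun h => ⟨fun r hr => (h _).1 ⟨r, hr, rfl⟩, fun v => (h v).2⟩,
    fun h v => ⟨fun ⟨r, hr, hv⟩ => hv ▸ h.1 r hr, h.2 v⟩⟩

lemma mem_firstColumn_iff (hT : IsFilling μ T) (hv : v ∈ Set.Icc 1 μ.card) :
    v ∈ firstColumn μ T ↔ ¬ ∃ a, Adjacent μ T a v := by
  rw [mem_firstColumn]
  constructor
  · rintro ⟨r, hr, rfl⟩ ⟨a, r', c', -, hr', -, h⟩
    simpa using hT.inj hr' hr h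
  · intro h
    obtain ⟨⟨r, c⟩, hx, rfl⟩ := hT.surjOn hv
    rcases c with _ | c
    · exact ⟨r, by simpa using hx, rfl⟩
    · have hx : (r, c + 1) ∈ μ := by simpa using hx
      exact absurd ⟨_, r, c, μ.up_left_mem le_rfl (Nat.le_succ c) hx, hx, rfl, rfl⟩ h

open Classical in
/-- `0`, never an entry of a filling, encodes "no left neighbour", as in `pivotRow`. -/
noncomputable def leftNeighbor (μ : YoungDiagram) (T : ℕ × ℕ → ℕ) (v : ℕ) : ℕ :=
  if h : ∃ a, Adjacent μ T a v then h.choose else 0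

lemma Adjacent.leftNeighbor_eq (hT : IsFilling μ T) (h : Adjacent μ T a v) :
    leftNeighbor μ T v = a := by
  have he : ∃ a, Adjacent μ T a v := ⟨a, h⟩
  rw [leftNeighbor, dif_pos he]
  exact he.choose_spec.left_unique hT h

lemma adjacent_leftNeighbor (hT : IsFilling μ T) (hv : ∃ a, Adjacent μ T a v) :
    Adjacent μ T (leftNeighbor μ T v) v := by
  obtain ⟨a, ha⟩ := hv
  rwa [ha.leftNeighbor_eq hT]

lemma leftNeighbor_eq_zero_iff (hT : IsFilling μ T) :
    leftNeighbor μ T v = 0 ↔ ¬ ∃ a, Adjacent μ T a v := by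
  refine ⟨fun h ⟨a, ha⟩ => ?_, fun h => by rw [leftNeighbor, dif_neg h]⟩
  have := (ha.left_mem_Icc hT).1
  rw [ha.leftNeighbor_eq hT] at h
  omega

lemma adjPairMatrix_ne_zero_iff {i j : Fin μ.card} :
    adjPairMatrix μ T i j ≠ 0 ↔ Adjacent μ T (i + 1) (j + 1) := by
  by_cases h : Adjacent μ T (i + 1) (j + 1) <;> simp [adjPairMatrix, h]

lemma isPivot_adjPairMatrix_iff (hT : IsFilling μ T) {i k : Fin μ.card} :
    IsPivot (adjPairMatrix μ T) i k ↔ Adjacent μ T (i + 1) (k + 1) := by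
  refine ⟨fun h => adjPairMatrix_ne_zero_iff.1 h.1, fun h => ⟨adjPairMatrix_ne_zero_iff.2 h,
    fun j hj => ?_, fun j hj => ?_⟩⟩
  · by_contra hne
    have := h.right_unique hT (adjPairMatrix_ne_zero_iff.1 hne)
    exact absurd hj (by rw [Fin.lt_def]; omega)
  · by_contra hne
    have := h.left_unique hT (adjPairMatrix_ne_zero_iff.1 hne)
    exact absurd hj (by rw [Fin.lt_def]; omega)

lemma pivotRow_adjPairMatrix (hT : IsFilling μ T) (k : Fin μ.card) :
    pivotRow (adjPairMatrix μ T) k = leftNeighbor μ T (k + 1) := by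
  by_cases h : ∃ a, Adjacent μ T a (k + 1)
  · obtain ⟨a, ha⟩ := h
    obtain ⟨i, rfl⟩ := exists_fin_add_one_eq (ha.left_mem_Icc hT)
    rw [((isPivot_adjPairMatrix_iff hT).2 ha).pivotRow_eq, ha.leftNeighbor_eq hT]
  · rw [(leftNeighbor_eq_zero_iff hT).2 h, pivotRow, dif_neg]
    exact fun ⟨i, hi⟩ => h ⟨_, (isPivot_adjPairMatrix_iff hT).1 hi⟩

lemma isHighestForm_adjPairMatrix_iff (hT : IsFilling μ T) :
    IsHighestForm (adjPairMatrix μ T) ↔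
      (∀ a b, Adjacent μ T a b → a < b) ∧ MonotoneOn (leftNeighbor μ T) (Set.Icc 1 μ.card) := by
  have hpivot : pivotRow (adjPairMatrix μ T) = fun k : Fin μ.card => leftNeighbor μ T (k + 1) :=
    funext (pivotRow_adjPairMatrix hT)
  rw [IsHighestForm, hpivot, monotone_fin_add_one_iff]
  refine and_congr ⟨fun h a b hab => ?_, fun h i j hji => ?_⟩ Iff.rfl
  · obtain ⟨i, rfl⟩ := exists_fin_add_one_eq (hab.left_mem_Icc hT)
    obtain ⟨j, rfl⟩ := exists_fin_add_one_eq (hab.right_mem_Icc hT)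
    by_contra hji
    exact adjPairMatrix_ne_zero_iff.2 hab (h i j (by rw [Fin.le_def]; omega))
  · by_contra hne
    have := h _ _ (adjPairMatrix_ne_zero_iff.1 hne)
    exact absurd hji (by rw [Fin.le_def]; omega)

lemma strictMonoOn_leftNeighbor_iff (hT : IsFilling μ T) :
    StrictMonoOn (leftNeighbor μ T) {v | ∃ a, Adjacent μ T a v} ↔
      ∀ i₁ j₁ i₂ j₂, Adjacent μ T i₁ j₁ → Adjacent μ T i₂ j₂ → (i₁ < i₂ ↔ j₁ < j₂) := by
  constructor
  · intro h i₁ j₁ i₂ j₂ h₁ h₂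
    rw [← h₁.leftNeighbor_eq hT, ← h₂.leftNeighbor_eq hT]
    exact h.lt_iff_lt ⟨_, h₁⟩ ⟨_, h₂⟩
  · intro h v hv w hw hvw
    exact (h _ _ _ _ (adjacent_leftNeighbor hT hv) (adjacent_leftNeighbor hT hw)).2 hvw

lemma MonotoneOn.strictMonoOn_leftNeighbor (hT : IsFilling μ T)
    (h : MonotoneOn (leftNeighbor μ T) (Set.Icc 1 μ.card)) :
    StrictMonoOn (leftNeighbor μ T) {v | ∃ a, Adjacent μ T a v} := by
  have hsub : {v | ∃ a, Adjacent μ T a v} ⊆ Set.Icc 1 μ.card := by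
    rintro _ ⟨_, ha⟩
    exact ha.right_mem_Icc hT
  refine (h.mono hsub).strictMonoOn_of_injOn ?_
  intro v hv w hw hvw
  exact (adjacent_leftNeighbor hT hv).right_unique hT (hvw ▸ adjacent_leftNeighbor hT hw)

lemma firstColumn_eq_Icc_of_monotoneOn (hT : IsFilling μ T)
    (h : MonotoneOn (leftNeighbor μ T) (Set.Icc 1 μ.card)) :
    firstColumn μ T = Finset.Icc 1 (μ.colLen 0) := by
  have hmem : ∀ v ∈ firstColumn μ T, v ∈ Set.Icc 1 μ.card := fun v hv => by
    obtain ⟨r, hr, rfl⟩ := mem_firstColumn.1 hv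
    exact hT.mem_Icc hr
  rw [← card_firstColumn hT]
  refine Finset.eq_Icc_one_card_of_forall_le_mem (fun h0 => by simpa using hmem 0 h0) ?_
  intro v hv w hw1 hwv
  have hv' := hmem v hv
  have hw' : w ∈ Set.Icc 1 μ.card := ⟨hw1, hwv.trans hv'.2⟩
  rw [mem_firstColumn_iff hT hv', ← leftNeighbor_eq_zero_iff hT] at hv
  rw [mem_firstColumn_iff hT hw', ← leftNeighbor_eq_zero_iff hT]
  exact Nat.eq_zero_of_le_zero (hv ▸ h hw' hv' hwv)

lemma exists_adjacent_iff_colLen_lt (hT : IsFilling μ T)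
    (hcol : firstColumn μ T = Finset.Icc 1 (μ.colLen 0)) (hv : v ∈ Set.Icc 1 μ.card) :
    (∃ a, Adjacent μ T a v) ↔ μ.colLen 0 < v := by
  rw [← not_iff_not, ← mem_firstColumn_iff hT hv, hcol, Finset.mem_Icc]
  grind

lemma monotoneOn_leftNeighbor (hT : IsFilling μ T)
    (hcol : firstColumn μ T = Finset.Icc 1 (μ.colLen 0))
    (hL : StrictMonoOn (leftNeighbor μ T) {v | ∃ a, Adjacent μ T a v}) :
    MonotoneOn (leftNeighbor μ T) (Set.Icc 1 μ.card) := by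
  intro v hv w hw hvw
  by_cases h0 : leftNeighbor μ T v = 0
  · exact h0 ▸ Nat.zero_le _
  · have hv' := not_not.1 ((leftNeighbor_eq_zero_iff hT).not.1 h0)
    have hw' := (exists_adjacent_iff_colLen_lt hT hcol hw).2
      (((exists_adjacent_iff_colLen_lt hT hcol hv).1 hv').trans_le hvw)
    exact hL.monotoneOn hv' hw' hvw

lemma Adjacent.lt (hT : IsFilling μ T) (hcol : firstColumn μ T = Finset.Icc 1 (μ.colLen 0))
    (hL : StrictMonoOn (leftNeighbor μ T) {v | ∃ a, Adjacent μ T a v})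
    (h : Adjacent μ T a b) : a < b := by
  have hb := h.right_mem_Icc hT
  have hmb := (exists_adjacent_iff_colLen_lt hT hcol hb).1 ⟨a, h⟩
  have hsub : Set.Icc b (b + (μ.card - b)) ⊆ {v | ∃ a, Adjacent μ T a v} := fun x hx =>
    (exists_adjacent_iff_colLen_lt hT hcol ⟨by grind, by grind⟩).2 (by grind)
  have hgrowth := (hL.mono hsub).add_le_nat
  have hlast := (adjacent_leftNeighbor hT (hsub ⟨by grind, le_rfl⟩)).left_mem_Icc hT
  rw [h.leftNeighbor_eq hT] at hgrowth
  have := h.ne hT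
  grind

end Filling

/-- the adjacent-pair matrix of a filling `T` of `μ` is in highest form iff
(a) the leftmost column of `T` is filled with `{1, ..., μ₁}` (μ₁ the first column length),
and (b) for adjacent pairs `(i₁,j₁)`, `(i₂,j₂)` of `T`, `i₁ < i₂ ↔ j₁ < j₂`. -/
theorem stmt3 (μ : YoungDiagram) (T : ℕ × ℕ → ℕ) (hT : IsFilling μ T) :
    IsHighestForm (adjPairMatrix μ T) ↔
      (((∀ r, (r, 0) ∈ μ → T (r, 0) ∈ Finset.Icc 1 (μ.colLen 0)) ∧
          ∀ v ∈ Finset.Icc 1 (μ.colLen 0), ∃ r, (r, 0) ∈ μ ∧ T (r, 0) = v) ∧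
        ∀ i₁ j₁ i₂ j₂, Adjacent μ T i₁ j₁ → Adjacent μ T i₂ j₂ → (i₁ < i₂ ↔ j₁ < j₂)) := by
  rw [isHighestForm_adjPairMatrix_iff hT, ← firstColumn_eq_Icc_iff,
    ← strictMonoOn_leftNeighbor_iff hT]
  constructor
  · rintro ⟨-, hmono⟩
    exact ⟨firstColumn_eq_Icc_of_monotoneOn hT hmono, hmono.strictMonoOn_leftNeighbor hT⟩
  · rintro ⟨hcol, hL⟩
    exact ⟨fun a b h => h.lt hT hcol hL, monotoneOn_leftNeighbor hT hcol hL⟩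
end

section
/- Let T and T' be two fillings of a Young diagram λ produced by the column-by-column algorithm (first column filled arbitrarily with {1,...,μ₁}, then each subsequent column s filled with the next μ_s consecutive integers in the row order determined by the first column). Then the adjacent-pair matrices satisfy N_T = N_{T'} if and only if T' is obtained from T by a sequence of row swaps, i.e., interchanges of the entire contents of pairs of equal-length rows. -/
/-- `T` is a filling produced by the column-by-column algorithm: the first column is
filled (arbitrarily) with `{1, ..., μ₁}` and, more generally, the `s`-th column is filled
with the next `μ_s` consecutive integers, placed in the row order determined by the
first column. -/
def IsAlgFilling (μ : YoungDiagram) (T : ℕ × ℕ → ℕ) : Prop :=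
  IsFilling μ T ∧
    (∀ r s, (r, s) ∈ μ →
      T (r, s) ∈ Finset.Ioc (∑ t ∈ Finset.range s, μ.colLen t)
        (∑ t ∈ Finset.range (s + 1), μ.colLen t)) ∧
    ∀ r r' s, (r, s) ∈ μ → (r', s) ∈ μ → (T (r, s) < T (r', s) ↔ T (r, 0) < T (r', 0))

/-- `T'` is obtained from `T` by a sequence of row swaps, i.e. by permuting rows of
equal lengths. -/
def RowSwapEquiv (μ : YoungDiagram) (T T' : ℕ × ℕ → ℕ) : Prop :=
  ∃ ρ : Equiv.Perm ℕ, (∀ r, μ.rowLen (ρ r) = μ.rowLen r) ∧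
    ∀ r s, (r, s) ∈ μ → T' (r, s) = T (ρ r, s)

/-!
Equal adjacent-pair matrices mean the two fillings have the same relation "`i` sits directly left
of `j`". Matching the first columns (both fill `{1, …, μ₁}` bijectively) gives a permutation `ρ`
of the rows with `T' (r, 0) = T (ρ r, 0)`. Since entries are distinct, a value has at most one
right neighbour, so the equality `T' (r, s) = T (ρ r, s)` propagates along each row, together
with the fact that rows `r` and `ρ r` end at the same column. Conversely, permuting rows of equal
length visibly preserves the adjacency relation.
-/

theorem Set.BijOn.exists_perm_comp_eq {α β : Type*} {f g : α → β} {s : Set α} {t : Set β}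
    (hf : Set.BijOn f s t) (hg : Set.BijOn g s t) :
    ∃ ρ : Equiv.Perm α, (∀ a, ρ a ∈ s ↔ a ∈ s) ∧ ∀ a ∈ s, f (ρ a) = g a := by
  classical
  let e : Equiv.Perm s := (hg.equiv g).trans (hf.equiv f).symm
  refine ⟨Equiv.Perm.ofSubtype e, Equiv.Perm.ofSubtype_apply_mem_iff_mem e, fun a ha => ?_⟩
  rw [Equiv.Perm.ofSubtype_apply_of_mem e ha]
  exact congrArg Subtype.val ((hf.equiv f).apply_symm_apply (hg.equiv g ⟨a, ha⟩))

theorem YoungDiagram.rowLen_eq_of_forall_mem_iff {μ : YoungDiagram} {r r' : ℕ}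
    (h : ∀ s, (r, s) ∈ μ ↔ (r', s) ∈ μ) : μ.rowLen r = μ.rowLen r' :=
  eq_of_forall_lt_iff fun s => by
    simpa only [YoungDiagram.mem_iff_lt_rowLen] using h s

section Adjacency

variable {μ : YoungDiagram} {T T' : ℕ × ℕ → ℕ}

theorem adjacent_apply_iff (hT : Set.InjOn T μ.cells) {r s : ℕ} (h : (r, s) ∈ μ) (j : ℕ) :
    Adjacent μ T (T (r, s)) j ↔ (r, s + 1) ∈ μ ∧ j = T (r, s + 1) := by
  constructor
  · rintro ⟨r', c, h₁, h₂, hT₁, rfl⟩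
    obtain ⟨rfl, rfl⟩ := Prod.mk.inj (hT h₁ h hT₁)
    exact ⟨h₂, rfl⟩
  · rintro ⟨h₂, rfl⟩
    exact ⟨r, s, h, h₂, rfl, rfl⟩

theorem Adjacent.exists_fin_succ_eq (hT : Set.MapsTo T μ.cells (Set.Icc 1 μ.card)) {i j : ℕ}
    (h : Adjacent μ T i j) : ∃ a b : Fin μ.card, (a : ℕ) + 1 = i ∧ (b : ℕ) + 1 = j := by
  obtain ⟨r, c, h₁, h₂, rfl, rfl⟩ := h
  obtain ⟨hi₁, hi₂⟩ := hT h₁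
  obtain ⟨hj₁, hj₂⟩ := hT h₂
  exact ⟨⟨T (r, c) - 1, by omega⟩, ⟨T (r, c + 1) - 1, by omega⟩, Nat.sub_add_cancel hi₁,
    Nat.sub_add_cancel hj₁⟩

theorem adjPairMatrix_apply_eq_one_iff (i j : Fin μ.card) :
    adjPairMatrix μ T i j = 1 ↔ Adjacent μ T (i + 1) (j + 1) := by
  simp [adjPairMatrix]

theorem Adjacent.of_adjPairMatrix_eq (hT : Set.MapsTo T μ.cells (Set.Icc 1 μ.card))
    (hN : adjPairMatrix μ T = adjPairMatrix μ T') {i j : ℕ} (h : Adjacent μ T i j) :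
    Adjacent μ T' i j := by
  obtain ⟨a, b, rfl, rfl⟩ := h.exists_fin_succ_eq hT
  rwa [← adjPairMatrix_apply_eq_one_iff, ← hN, adjPairMatrix_apply_eq_one_iff]

theorem adjPairMatrix_eq_iff (hT : Set.MapsTo T μ.cells (Set.Icc 1 μ.card))
    (hT' : Set.MapsTo T' μ.cells (Set.Icc 1 μ.card)) :
    adjPairMatrix μ T = adjPairMatrix μ T' ↔ ∀ i j, Adjacent μ T i j ↔ Adjacent μ T' i j := by
  refine ⟨fun hN i j => ⟨.of_adjPairMatrix_eq hT hN, .of_adjPairMatrix_eq hT' hN.symm⟩,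
    fun h => ?_⟩
  have hadj : Adjacent μ T = Adjacent μ T' := funext₂ fun i j => propext (h i j)
  unfold adjPairMatrix
  rw [hadj]

theorem RowSwapEquiv.adjacent_iff (h : RowSwapEquiv μ T T') (i j : ℕ) :
    Adjacent μ T i j ↔ Adjacent μ T' i j := by
  obtain ⟨ρ, hlen, hT'⟩ := h
  have hmem : ∀ r c, (ρ r, c) ∈ μ ↔ (r, c) ∈ μ := fun r c => by
    rw [YoungDiagram.mem_iff_lt_rowLen, YoungDiagram.mem_iff_lt_rowLen, hlen]
  rw [Adjacent, ρ.surjective.exists]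
  refine exists_congr fun r => exists_congr fun c => ?_
  rw [hmem, hmem]
  constructor
  · rintro ⟨h₁, h₂, rfl, rfl⟩
    exact ⟨h₁, h₂, hT' r c h₁, hT' r (c + 1) h₂⟩
  · rintro ⟨h₁, h₂, rfl, rfl⟩
    exact ⟨h₁, h₂, (hT' r c h₁).symm, (hT' r (c + 1) h₂).symm⟩

theorem succ_col_of_adjacent_iff (hT : Set.InjOn T μ.cells) (hT' : Set.InjOn T' μ.cells)
    (hadj : ∀ i j, Adjacent μ T i j ↔ Adjacent μ T' i j) {r r' s : ℕ} (hs : (r, s) ∈ μ)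
    (hs' : (r', s) ∈ μ) (hv : T' (r, s) = T (r', s)) :
    ((r', s + 1) ∈ μ ↔ (r, s + 1) ∈ μ) ∧ ((r, s + 1) ∈ μ → T' (r, s + 1) = T (r', s + 1)) := by
  have key : ∀ j, ((r', s + 1) ∈ μ ∧ j = T (r', s + 1)) ↔ ((r, s + 1) ∈ μ ∧ j = T' (r, s + 1)) :=
    fun j => by rw [← adjacent_apply_iff hT hs', ← adjacent_apply_iff hT' hs, hadj, hv]
  exact ⟨⟨fun h => ((key _).1 ⟨h, rfl⟩).1, fun h => ((key _).2 ⟨h, rfl⟩).1⟩,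
    fun h => ((key _).2 ⟨h, rfl⟩).2⟩

theorem rowSwapEquiv_of_adjacent_iff (hT : Set.InjOn T μ.cells) (hT' : Set.InjOn T' μ.cells)
    (hadj : ∀ i j, Adjacent μ T i j ↔ Adjacent μ T' i j) (ρ : Equiv.Perm ℕ)
    (hmem₀ : ∀ r, (ρ r, 0) ∈ μ ↔ (r, 0) ∈ μ) (hρ₀ : ∀ r, (r, 0) ∈ μ → T' (r, 0) = T (ρ r, 0)) :
    RowSwapEquiv μ T T' := by
  have rows : ∀ s r, ((ρ r, s) ∈ μ ↔ (r, s) ∈ μ) ∧ ((r, s) ∈ μ → T' (r, s) = T (ρ r, s)) := by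
    intro s
    induction s with
    | zero => exact fun r => ⟨hmem₀ r, hρ₀ r⟩
    | succ s ih =>
      intro r
      by_cases hs : (r, s) ∈ μ
      · exact succ_col_of_adjacent_iff hT hT' hadj hs ((ih r).1.2 hs) ((ih r).2 hs)
      · have hs' : (ρ r, s) ∉ μ := mt (ih r).1.1 hs
        have up {k} : (k, s + 1) ∈ μ → (k, s) ∈ μ := μ.up_left_mem le_rfl s.le_succ
        exact ⟨iff_of_false (mt up hs') (mt up hs), fun h => absurd (up h) hs⟩
  exact ⟨ρ, fun r => YoungDiagram.rowLen_eq_of_forall_mem_iff fun s => (rows s r).1,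
    fun r s => (rows s r).2⟩

end Adjacency

theorem IsAlgFilling.bijOn_firstColumn {μ : YoungDiagram} {T : ℕ × ℕ → ℕ}
    (hT : IsAlgFilling μ T) :
    Set.BijOn (fun r => T (r, 0)) ↑(Finset.range (μ.colLen 0)) ↑(Finset.Ioc 0 (μ.colLen 0)) := by
  have hmem : ∀ r ∈ Finset.range (μ.colLen 0), (r, 0) ∈ μ := fun r hr =>
    YoungDiagram.mem_iff_lt_colLen.2 (Finset.mem_range.1 hr)
  have maps : Set.MapsTo (fun r => T (r, 0)) ↑(Finset.range (μ.colLen 0))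
      ↑(Finset.Ioc 0 (μ.colLen 0)) := fun r hr => by
    simpa using hT.2.1 r 0 (hmem r hr)
  have inj : Set.InjOn (fun r => T (r, 0)) ↑(Finset.range (μ.colLen 0)) :=
    fun a ha b hb hab => congrArg Prod.fst (hT.1.injOn (hmem a ha) (hmem b hb) hab)
  exact ⟨maps, inj, Finset.surjOn_of_injOn_of_card_le _ maps inj (by simp)⟩

/-- for two fillings `T`, `T'` of `μ` produced by the column-by-column
algorithm, the adjacent-pair matrices satisfy `N_T = N_{T'}` iff `T'` is obtained from
`T` by a sequence of row swaps (interchanges of full contents of equal-length rows). -/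
theorem stmt6 (μ : YoungDiagram) (T T' : ℕ × ℕ → ℕ)
    (hT : IsAlgFilling μ T) (hT' : IsAlgFilling μ T') :
    adjPairMatrix μ T = adjPairMatrix μ T' ↔ RowSwapEquiv μ T T' := by
  rw [adjPairMatrix_eq_iff hT.1.mapsTo hT'.1.mapsTo]
  refine ⟨fun hadj => ?_, RowSwapEquiv.adjacent_iff⟩
  obtain ⟨ρ, hmem₀, hρ₀⟩ := hT.bijOn_firstColumn.exists_perm_comp_eq hT'.bijOn_firstColumn
  refine rowSwapEquiv_of_adjacent_iff hT.1.injOn hT'.1.injOn hadj ρ (fun r => ?_)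
    (fun r hr => (hρ₀ r ?_).symm)
  · simpa only [Finset.coe_range, Set.mem_Iio, ← YoungDiagram.mem_iff_lt_colLen] using hmem₀ r
  · simpa only [Finset.coe_range, Set.mem_Iio, ← YoungDiagram.mem_iff_lt_colLen] using hr
end
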